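/- For every integer n ≥ 2, one has N⁺(n² + n) ≥ 1 and N⁻(n² + n) ≥ 1, and consequently M(n² + n) ≥ 9. -/

import Mathlib

/-- A pair of integers `(a, b)` is multiplicatively dependent: `ab ≠ 0` and
there is a nonzero pair of integer exponents `(k₁, k₂)` with `a^k₁ * b^k₂ = 1`
(evaluated in `ℚ`). -/
def MultDepPair (a b : ℤ) : Prop :=
  a * b ≠ 0 ∧ ∃ k : ℤ × ℤ, k ≠ 0 ∧ (a : ℚ) ^ k.1 * (b : ℚ) ^ k.2 = 1

/-- `MSet d` is the set of multiplicatively dependent pairs `(a, b) ∈ ℤ²`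
with difference `b - a = d`. -/
def MSet (d : ℤ) : Set (ℤ × ℤ) :=
  {p | MultDepPair p.1 p.2 ∧ p.2 - p.1 = d}

/-- `M d` is the number of multiplicatively dependent pairs with difference `d`. -/
noncomputable def M (d : ℤ) : ℕ := (MSet d).ncard

/-- `g` is a perfect power: `g = a ^ k` with `a ≥ 2`, `k ≥ 2`. -/
def IsPerfectPow (g : ℕ) : Prop := ∃ a k : ℕ, 2 ≤ a ∧ 2 ≤ k ∧ g = a ^ k

/-- `Nplus d` is the number of primitive solutions `(g, x, y)` of `g^y + g^x = d`
with `g ≥ 2` not a perfect power and `y > x ≥ 1`. -/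
noncomputable def Nplus (d : ℕ) : ℕ :=
  {T : ℕ × ℕ × ℕ | 2 ≤ T.1 ∧ 1 ≤ T.2.1 ∧ T.2.1 < T.2.2 ∧ ¬ IsPerfectPow T.1 ∧
    T.1 ^ T.2.2 + T.1 ^ T.2.1 = d}.ncard

/-- `Nminus d` is the number of primitive solutions `(g, x, y)` of `g^y - g^x = d`
with `g ≥ 2` not a perfect power and `y > x ≥ 1`. -/
noncomputable def Nminus (d : ℕ) : ℕ :=
  {T : ℕ × ℕ × ℕ | 2 ≤ T.1 ∧ 1 ≤ T.2.1 ∧ T.2.1 < T.2.2 ∧ ¬ IsPerfectPow T.1 ∧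
    T.1 ^ T.2.2 = T.1 ^ T.2.1 + d}.ncard

/-!
A multiplicatively dependent pair of nonzero integers satisfies `a ^ u = b ^ v` or
`a ^ u * b ^ v = 1` with natural exponents not both zero, so one of `a`, `b` divides the other
(in an integrally closed domain, `b ^ u ∣ a ^ u` forces `b ∣ a`), hence divides `d = b - a`.
So `ℳ(d)` is finite for `d ≠ 0`, which matters because `ncard` is `0` on infinite sets, and nine
explicit pairs give `M(n² + n) ≥ 9`. The primitive solutions come from writing `n = g ^ m` and
`n + 1 = g ^ m` with `g` not a perfect power: `g ^ (2m) ± g ^ m = n² + n`.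
-/

theorem dvd_or_dvd_of_pow_mul_pow_eq_one {M : Type*} [CommMonoid M] {a b : M} {u v : ℕ}
    (huv : u ≠ 0 ∨ v ≠ 0) (h : a ^ u * b ^ v = 1) : a ∣ b ∨ b ∣ a := by
  rcases huv with hu | hv
  · exact .inl ((isUnit_pow_iff hu).1 (isUnit_of_dvd_one (Dvd.intro _ h))).dvd
  · exact .inr ((isUnit_pow_iff hv).1 (isUnit_of_dvd_one (Dvd.intro_left _ h))).dvd

theorem dvd_or_dvd_of_pow_eq_pow {R : Type*} [CommRing R] [IsDomain R] [IsIntegrallyClosed R]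
    {a b : R} {u v : ℕ} (huv : u ≠ 0 ∨ v ≠ 0) (h : a ^ u = b ^ v) : a ∣ b ∨ b ∣ a := by
  wlog huv' : u ≤ v generalizing a b u v
  · exact (this huv.symm h.symm (by omega)).symm
  rcases Nat.eq_zero_or_pos u with rfl | hu
  · have hv : v ≠ 0 := by omega
    exact .inr ((isUnit_pow_iff hv).1 (h ▸ pow_zero a ▸ isUnit_one)).dvd
  · exact .inr ((IsIntegrallyClosed.pow_dvd_pow_iff hu.ne').1 (h ▸ pow_dvd_pow b huv'))

theorem MultDepPair.dvd_or_dvd {a b : ℤ} (h : MultDepPair a b) : a ∣ b ∨ b ∣ a := by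
  obtain ⟨hab, ⟨k₁, k₂⟩, hk, h⟩ := h
  have ha : (a : ℚ) ≠ 0 := by exact_mod_cast left_ne_zero_of_mul hab
  have hb : (b : ℚ) ≠ 0 := by exact_mod_cast right_ne_zero_of_mul hab
  have huv : k₁.natAbs ≠ 0 ∨ k₂.natAbs ≠ 0 := by
    by_contra! h0
    exact hk (by simp_all [Prod.ext_iff])
  rcases Int.natAbs_eq k₁ with h₁ | h₁ <;> rcases Int.natAbs_eq k₂ with h₂ | h₂ <;>
    rw [h₁, h₂] at h <;> simp only [zpow_neg, zpow_natCast] at h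
  · exact dvd_or_dvd_of_pow_mul_pow_eq_one huv (by exact_mod_cast h)
  · exact dvd_or_dvd_of_pow_eq_pow huv
      (by exact_mod_cast (mul_inv_eq_one₀ (pow_ne_zero _ hb)).1 h)
  · exact dvd_or_dvd_of_pow_eq_pow huv
      (by exact_mod_cast (inv_mul_eq_one₀ (pow_ne_zero _ ha)).1 h)
  · rw [← mul_inv, inv_eq_one] at h
    exact dvd_or_dvd_of_pow_mul_pow_eq_one huv (by exact_mod_cast h)

theorem MultDepPair.of_pow_eq_pow {a b : ℤ} (ha : a ≠ 0) (hb : b ≠ 0) {u v : ℕ}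
    (huv : u ≠ 0 ∨ v ≠ 0) (h : a ^ u = b ^ v) : MultDepPair a b := by
  refine ⟨mul_ne_zero ha hb, ((u : ℤ), -(v : ℤ)), fun h0 => ?_, ?_⟩
  · simp only [Prod.ext_iff, Prod.fst_zero, Prod.snd_zero] at h0
    omega
  rw [zpow_neg, zpow_natCast, zpow_natCast, mul_inv_eq_one₀ (by positivity)]
  exact_mod_cast h

theorem MSet_finite {d : ℤ} (hd : d ≠ 0) : (MSet d).Finite := by
  refine ((Set.finite_Icc (-2 * |d|) (2 * |d|)).image fun a => (a, a + d)).subset ?_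
  rintro ⟨a, b⟩ ⟨hdep, hba⟩
  dsimp only at hdep hba
  have hle : |a| ≤ |d| ∨ |b| ≤ |d| := by
    subst hba
    simp only [← Int.natCast_natAbs, Nat.cast_le]
    exact hdep.dvd_or_dvd.imp (fun h => Int.natAbs_le_of_dvd_ne_zero (dvd_sub h dvd_rfl) hd)
      (fun h => Int.natAbs_le_of_dvd_ne_zero (dvd_sub dvd_rfl h) hd)
  refine ⟨a, Set.mem_Icc.2 ?_, congrArg (Prod.mk a) (by omega)⟩
  rcases hle with hle | hle <;> constructor <;>
    linarith [abs_le.1 hle, neg_abs_le d, le_abs_self d]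

theorem finite_setOf_pow_le (D : ℕ) :
    {T : ℕ × ℕ × ℕ | 2 ≤ T.1 ∧ T.2.1 < T.2.2 ∧ T.1 ^ T.2.2 ≤ D}.Finite := by
  refine ((Set.finite_Iic D).prod ((Set.finite_Iic D).prod (Set.finite_Iic D))).subset ?_
  rintro ⟨g, x, y⟩ ⟨hg, hxy, hD⟩
  dsimp only at hg hxy hD
  have hgy : g ≤ g ^ y := Nat.le_self_pow (by omega) g
  have hy : y < g ^ y := Nat.lt_pow_self (by omega)
  simp only [Set.mem_prod, Set.mem_Iic]
  omega

theorem one_le_Nplus {d g x y : ℕ} (hg : 2 ≤ g) (hx : 1 ≤ x) (hxy : x < y)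
    (hgp : ¬IsPerfectPow g) (h : g ^ y + g ^ x = d) : 1 ≤ Nplus d := by
  refine (Set.ncard_pos ((finite_setOf_pow_le d).subset ?_)).2
    ⟨(g, x, y), hg, hx, hxy, hgp, h⟩
  rintro ⟨g, x, y⟩ ⟨hg, -, hxy, -, h⟩
  exact ⟨hg, hxy, h ▸ Nat.le_add_right _ _⟩

theorem one_le_Nminus {d g x y : ℕ} (hg : 2 ≤ g) (hx : 1 ≤ x) (hxy : x < y)
    (hgp : ¬IsPerfectPow g) (h : g ^ y = g ^ x + d) : 1 ≤ Nminus d := by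
  refine (Set.ncard_pos ((finite_setOf_pow_le (2 * d)).subset ?_)).2
    ⟨(g, x, y), hg, hx, hxy, hgp, h⟩
  rintro ⟨g, x, y⟩ ⟨hg, -, hxy, -, h⟩
  dsimp only at hg hxy h
  have : 2 * g ^ x ≤ g ^ y := calc
    2 * g ^ x ≤ g ^ x * g := by rw [mul_comm]; exact Nat.mul_le_mul_left _ hg
    _ = g ^ (x + 1) := (pow_succ g x).symm
    _ ≤ g ^ y := Nat.pow_le_pow_right (by omega) hxy
  exact ⟨hg, hxy, by dsimp only; omega⟩

theorem exists_pow_eq_of_not_isPerfectPow {n : ℕ} (hn : 2 ≤ n) :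
    ∃ g m : ℕ, 2 ≤ g ∧ 1 ≤ m ∧ ¬IsPerfectPow g ∧ g ^ m = n := by
  induction n using Nat.strong_induction_on with
  | _ n ih =>
    by_cases h : IsPerfectPow n
    · obtain ⟨a, k, ha, hk, rfl⟩ := h
      obtain ⟨g, m, hg, hm, hgp, rfl⟩ := ih a (lt_self_pow₀ ha hk) ha
      exact ⟨g, m * k, hg, Nat.mul_pos hm (by omega), hgp, pow_mul g m k⟩
    · exact ⟨n, 1, hn, le_rfl, h, pow_one n⟩

theorem nine_le_M {n : ℤ} (hn : 2 ≤ n) : 9 ≤ M (n ^ 2 + n) := by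
  obtain ⟨c, hc⟩ := Int.even_mul_succ_self n
  have hc : c + c = n ^ 2 + n := by rw [← hc]; ring
  have hsq : 2 * n ≤ n ^ 2 := by nlinarith
  have hsq' : (n + 1) ^ 2 = n ^ 2 + 2 * n + 1 := by ring
  -- `(1, d + 1)`, `(-1, d - 1)`, `(n + 1, (n + 1)²)`, `(-n, n²)`, their images under
  -- `(a, b) ↦ (-b, -a)`, and `(-d/2, d/2)`, where `d = n² + n`; listed by increasing `a`.
  let l : List (ℤ × ℤ) := [(-(n + 1) ^ 2, -(n + 1)), (-(n ^ 2 + n) - 1, -1), (1 - (n ^ 2 + n), 1),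
    (-n ^ 2, n), (-c, c), (-n, n ^ 2), (-1, n ^ 2 + n - 1), (1, n ^ 2 + n + 1), (n + 1, (n + 1) ^ 2)]
  have hl : ∀ p ∈ l, p ∈ MSet (n ^ 2 + n) := by
    simp only [l, List.mem_cons, List.not_mem_nil, or_false, forall_eq_or_imp, forall_eq]
    refine ⟨?_, ?_, ?_, ?_, ?_, ?_, ?_, ?_, ?_⟩
    · exact ⟨.of_pow_eq_pow (u := 2) (v := 4) (by omega) (by omega) (by omega) (by ring), by ring⟩
    · exact ⟨.of_pow_eq_pow (u := 0) (v := 2) (by omega) (by omega) (by omega) (by ring), by ring⟩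
    · exact ⟨.of_pow_eq_pow (u := 0) (v := 1) (by omega) (by omega) (by omega) (by ring), by ring⟩
    · exact ⟨.of_pow_eq_pow (u := 2) (v := 4) (by omega) (by omega) (by omega) (by ring), by ring⟩
    · exact ⟨.of_pow_eq_pow (u := 2) (v := 2) (by omega) (by omega) (by omega) (by ring), by omega⟩
    · exact ⟨.of_pow_eq_pow (u := 2) (v := 1) (by omega) (by omega) (by omega) (by ring), by ring⟩
    · exact ⟨.of_pow_eq_pow (u := 2) (v := 0) (by omega) (by omega) (by omega) (by ring), by ring⟩
    · exact ⟨.of_pow_eq_pow (u := 1) (v := 0) (by omega) (by omega) (by omega) (by ring), by ring⟩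
    · exact ⟨.of_pow_eq_pow (u := 2) (v := 1) (by omega) (by omega) (by omega) (by ring), by ring⟩
  have hnodup : l.Nodup := by
    refine List.Nodup.of_map Prod.fst (List.SortedLT.nodup ?_)
    simp only [l, List.map_cons, List.map_nil, List.sortedLT_iff_isChain, List.isChain_cons_cons,
      List.isChain_singleton, and_true]
    omega
  calc 9 = l.toFinset.card := (List.toFinset_card_of_nodup hnodup).symm
    _ ≤ M (n ^ 2 + n) := by
      rw [← Set.ncard_coe_finset]
      exact Set.ncard_le_ncard (fun p hp => hl p (List.mem_toFinset.1 hp)) (MSet_finite (by omega))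

theorem stmt19 (n : ℕ) (hn : 2 ≤ n) :
    1 ≤ Nplus (n ^ 2 + n) ∧ 1 ≤ Nminus (n ^ 2 + n) ∧ 9 ≤ M ((n ^ 2 + n : ℕ) : ℤ) := by
  obtain ⟨g, m, hg, hm, hgp, hgm⟩ := exists_pow_eq_of_not_isPerfectPow hn
  obtain ⟨g', m', hg', hm', hgp', hgm'⟩ :=
    exists_pow_eq_of_not_isPerfectPow (show 2 ≤ n + 1 by omega)
  refine ⟨one_le_Nplus hg hm (by omega : m < 2 * m) hgp ?_,
    one_le_Nminus hg' hm' (by omega : m' < 2 * m') hgp' ?_, ?_⟩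
  · rw [pow_mul', hgm]
  · rw [pow_mul', hgm']; ring
  · push_cast
    exact nine_le_M (by exact_mod_cast hn)
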